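/- For every even n ≥ 6, in the antagonistic game where the first player selects the word a^k b^{k+2} with 2k+2 = n, and then the players alternately (starting with the second player) delete one letter until the word is a palindrome or antipalindrome, the first player can guarantee that the game lasts at least n-4 moves. -/
import Mathlib


/-- A word over {a,b} is modeled as a `List Bool` (`true` = a, `false` = b). -/
def Pal (w : List Bool) : Prop := w.reverse = w

/-- Antipalindrome: `a_i ≠ a_{n-i+1}` for all `i`, i.e. letterwise negation equals reversal. -/
def Antipal (w : List Bool) : Prop := w.map (!·) = w.reverse

/-- Minimal number of deletions turning `w` into a palindrome or antipalindrome. -/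
noncomputable def Sd (w : List Bool) : ℕ :=
  sInf {k | ∃ v : List Bool, v.Sublist w ∧ (Pal v ∨ Antipal v) ∧ w.length = v.length + k}

/-- Maximal `Sd w` over words of length `n`. -/
noncomputable def SdN (n : ℕ) : ℕ :=
  sSup {m | ∃ w : List Bool, w.length = n ∧ Sd w = m}

/-- One-letter deletions of a word. -/
def Deletions (w : List Bool) : Set (List Bool) :=
  {v | v.Sublist w ∧ v.length + 1 = w.length}

/-- `Guarantee turn w r`: with `w` the current word and (`turn = false`: the second player
to move; `turn = true`: the first player to move), the first player can guarantee that at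
least `r` more deletions take place before the word becomes a palindrome or antipalindrome. -/
inductive Guarantee : Bool → List Bool → ℕ → Prop
  | zero (turn : Bool) (w : List Bool) : Guarantee turn w 0
  | opp (w : List Bool) (r : ℕ) (h : ¬(Pal w ∨ Antipal w))
      (H : ∀ v ∈ Deletions w, Guarantee true v r) : Guarantee false w (r+1)
  | me (w : List Bool) (r : ℕ) (h : ¬(Pal w ∨ Antipal w))
      (v : List Bool) (hv : v ∈ Deletions w) (H : Guarantee false v r) :
      Guarantee true w (r+1)


def W (i j : ℕ) : List Bool := List.replicate i true ++ List.replicate j false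

lemma notPA (i j : ℕ) (hi : 1 ≤ i) (hij : i < j) : ¬(Pal (W i j) ∨ Antipal (W i j)) := by
  rintro (h | h)
  · unfold Pal W at h
    rw [List.reverse_append, List.reverse_replicate, List.reverse_replicate] at h
    obtain ⟨j', rfl⟩ : ∃ j', j = j' + 1 := ⟨j - 1, by omega⟩
    obtain ⟨i', rfl⟩ : ∃ i', i = i' + 1 := ⟨i - 1, by omega⟩
    have := congrArg List.head? h
    simp [List.replicate_succ, List.head?_append] at this
  · unfold Antipal W at h
    rw [List.map_append, List.map_replicate, List.map_replicate,
      List.reverse_append, List.reverse_replicate, List.reverse_replicate] at h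
    have := congrArg (fun l => l.count true) h
    simp [List.count_append, List.count_replicate] at this
    omega

lemma del_mem (i j : ℕ) (hi : 1 ≤ i) (hj : 1 ≤ j) (v : List Bool)
    (hv : v ∈ Deletions (W i j)) : v = W (i-1) j ∨ v = W i (j-1) := by
  obtain ⟨hs, hl⟩ := hv
  unfold W at hs hl ⊢
  rw [List.sublist_append_iff] at hs
  obtain ⟨l₁, l₂, rfl, h₁, h₂⟩ := hs
  rw [List.sublist_replicate_iff] at h₁ h₂
  obtain ⟨p, hp, rfl⟩ := h₁
  obtain ⟨q, hq, rfl⟩ := h₂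
  simp [List.length_append, List.length_replicate] at hl
  rcases Nat.lt_or_ge p i with h | h
  · left; have : p = i - 1 ∧ q = j := by omega
    rw [this.1, this.2]
  · right; have : p = i ∧ q = j - 1 := by omega
    rw [this.1, this.2]

lemma mem_del (i j : ℕ) : W i j ∈ Deletions (W i (j+1)) := by
  constructor
  · exact List.Sublist.append (List.Sublist.refl _)
      ((List.replicate_sublist_replicate false).2 (Nat.le_succ j))
  · simp [W]
    omega

lemma mem_del' (i j : ℕ) : W i j ∈ Deletions (W (i+1) j) := by
  constructor
  · exact List.Sublist.append
      ((List.replicate_sublist_replicate true).2 (Nat.le_succ i)) (List.Sublist.refl _)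
  · simp [W]
    omega

lemma main_lemma : ∀ i : ℕ, Guarantee false (W (i+1) (i+3)) (2*i) := by
  intro i
  induction i with
  | zero => exact Guarantee.zero _ _
  | succ m ih =>
    have h2 : 2 * (m + 1) = (2 * m + 1) + 1 := by ring
    rw [h2]
    refine Guarantee.opp _ _ (notPA _ _ (by omega) (by omega)) ?_
    intro v hv
    rcases del_mem (m+2) (m+4) (by omega) (by omega) v hv with rfl | rfl
    · have h3 : m + 2 - 1 = m + 1 := rfl
      rw [h3]
      exact Guarantee.me _ _ (notPA _ _ (by omega) (by omega)) _
        (mem_del (m+1) (m+3)) ih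
    · have : m + 4 - 1 = m + 3 := by omega
      rw [this]
      exact Guarantee.me _ _ (notPA _ _ (by omega) (by omega)) _
        (mem_del' (m+1) (m+3)) ih

theorem game_lower_bound (n k : ℕ) (hn : n = 2*k + 2) (h6 : 6 ≤ n) (he : Even n) :
    Guarantee false (List.replicate k true ++ List.replicate (k+2) false) (n - 4) := by
  obtain ⟨m, rfl⟩ : ∃ m, k = m + 1 := ⟨k - 1, by omega⟩
  have : n - 4 = 2 * m := by omega
  rw [this]
  have := main_lemma m
  simpa [W] using this
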